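/- arXiv:2401.06714 — 2 statements merged into one kernel-verified Lean document; each statement's English description precedes it below -/
import Mathlib

section
/- Let H = (V_L, V_R, E) be a bipartite graph where V_L = {v_1, ..., v_h} corresponds to pairwise disjoint finite sets G_1, ..., G_h of points, each with |G_i| > U, and V_R corresponds to clusters C_1*, ..., C_k* (pairwise disjoint, with union of size at most the total), with an edge (v_i, w_j) iff |G_i ∩ C_j*| ≥ γU. Suppose each C_j* has size at most U, γ > 0 satisfies k²γ ≤ 1, and every point of every G_i lies in some C_j*. Then H has a matching saturating V_L. -/
theorem stmt_0 {α : Type*} [DecidableEq α] (h k : ℕ) (U γ : ℝ)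
    (hU : 0 < U) (hγ : 0 < γ) (hkγ : (k : ℝ) ^ 2 * γ ≤ 1)
    (G : Fin h → Finset α) (C : Fin k → Finset α)
    (hGdisj : ∀ i i', i ≠ i' → Disjoint (G i) (G i'))
    (hCdisj : ∀ j j', j ≠ j' → Disjoint (C j) (C j'))
    (hGU : ∀ i, U < ((G i).card : ℝ))
    (hCU : ∀ j, ((C j).card : ℝ) ≤ U)
    (hcover : ∀ i, ∀ x ∈ G i, ∃ j, x ∈ C j) :
    ∃ m : Fin h → Fin k, Function.Injective m ∧
      ∀ i, γ * U ≤ ((G i ∩ C (m i)).card : ℝ) := by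
  classical
  set t : Fin h → Finset (Fin k) :=
    fun i => Finset.univ.filter (fun j => γ * U ≤ ((G i ∩ C j).card : ℝ)) with ht
  -- card of G i splits over clusters
  have hcard : ∀ i, ((G i).card : ℝ) = ∑ j, ((G i ∩ C j).card : ℝ) := by
    intro i
    have hG : G i = Finset.univ.biUnion (fun j => G i ∩ C j) := by
      ext x
      simp only [Finset.mem_biUnion, Finset.mem_univ, true_and, Finset.mem_inter]
      constructor
      · intro hx; obtain ⟨j, hj⟩ := hcover i x hx; exact ⟨j, hx, hj⟩
      · rintro ⟨j, hx, _⟩; exact hx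
    have := Finset.card_biUnion (s := (Finset.univ : Finset (Fin k)))
      (t := fun j => G i ∩ C j) (fun j _ j' _ hjj' =>
        ((hCdisj j j' hjj').mono Finset.inter_subset_right Finset.inter_subset_right))
    calc ((G i).card : ℝ)
        = (((Finset.univ.biUnion fun j => G i ∩ C j)).card : ℝ) := by rw [← hG]
      _ = ∑ j, ((G i ∩ C j).card : ℝ) := by rw [this]; push_cast; rfl
  -- sum over disjoint G i inside a single cluster
  have key : ∀ (S : Finset (Fin h)) (j : Fin k),
      ∑ i ∈ S, ((G i ∩ C j).card : ℝ) ≤ ((C j).card : ℝ) := by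
    intro S j
    have hdisj : ∀ i ∈ S, ∀ i' ∈ S, i ≠ i' →
        Disjoint (G i ∩ C j) (G i' ∩ C j) := fun i _ i' _ hii' =>
      (hGdisj i i' hii').mono Finset.inter_subset_left Finset.inter_subset_left
    have hc := Finset.card_biUnion hdisj
    have hsub : S.biUnion (fun i => G i ∩ C j) ⊆ C j := by
      intro x hx
      simp only [Finset.mem_biUnion, Finset.mem_inter] at hx
      obtain ⟨i, _, _, hxC⟩ := hx
      exact hxC
    have := Finset.card_le_card hsub
    rw [hc] at this
    calc ∑ i ∈ S, ((G i ∩ C j).card : ℝ)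
        = ((∑ i ∈ S, (G i ∩ C j).card : ℕ) : ℝ) := by push_cast; rfl
      _ ≤ ((C j).card : ℝ) := by exact_mod_cast this
  have hall : ∀ S : Finset (Fin h), S.card ≤ (S.biUnion t).card := by
    intro S
    by_contra hc
    push_neg at hc
    set N := S.biUnion t with hN
    have hSne : S.Nonempty := by
      rw [← Finset.card_pos]
      omega
    have hsum : (S.card : ℝ) * U < ∑ i ∈ S, ((G i).card : ℝ) := by
      calc (S.card : ℝ) * U = ∑ _i ∈ S, U := by
            rw [Finset.sum_const, nsmul_eq_mul]
        _ < ∑ i ∈ S, ((G i).card : ℝ) :=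
            Finset.sum_lt_sum_of_nonempty hSne (fun i _ => hGU i)
    have hswap : ∑ i ∈ S, ((G i).card : ℝ)
        = ∑ j : Fin k, ∑ i ∈ S, ((G i ∩ C j).card : ℝ) := by
      rw [Finset.sum_comm]
      exact Finset.sum_congr rfl fun i _ => hcard i
    -- s ≤ k
    have hsk : (S.card : ℝ) ≤ (k : ℝ) := by
      have : ∑ j : Fin k, ∑ i ∈ S, ((G i ∩ C j).card : ℝ) ≤ ∑ _j : Fin k, U :=
        Finset.sum_le_sum fun j _ => le_trans (key S j) (hCU j)
      rw [Finset.sum_const, Finset.card_univ, Fintype.card_fin, nsmul_eq_mul] at this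
      nlinarith [hsum, hswap ▸ hsum]
    -- split the sum over N and its complement
    have hsplit : ∑ j : Fin k, ∑ i ∈ S, ((G i ∩ C j).card : ℝ)
        = ∑ j ∈ N, ∑ i ∈ S, ((G i ∩ C j).card : ℝ)
          + ∑ j ∈ Nᶜ, ∑ i ∈ S, ((G i ∩ C j).card : ℝ) :=
      (Finset.sum_add_sum_compl N _).symm
    have hbound1 : ∑ j ∈ N, ∑ i ∈ S, ((G i ∩ C j).card : ℝ) ≤ (N.card : ℝ) * U := by
      calc ∑ j ∈ N, ∑ i ∈ S, ((G i ∩ C j).card : ℝ)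
          ≤ ∑ _j ∈ N, U := Finset.sum_le_sum fun j _ => le_trans (key S j) (hCU j)
        _ = (N.card : ℝ) * U := by rw [Finset.sum_const, nsmul_eq_mul]
    have hbound2 : ∑ j ∈ Nᶜ, ∑ i ∈ S, ((G i ∩ C j).card : ℝ)
        ≤ (k : ℝ) * ((S.card : ℝ) * (γ * U)) := by
      have hterm : ∀ j ∈ Nᶜ, ∑ i ∈ S, ((G i ∩ C j).card : ℝ) ≤ (S.card : ℝ) * (γ * U) := by
        intro j hj
        have hjN : j ∉ N := Finset.mem_compl.mp hj
        have : ∀ i ∈ S, ((G i ∩ C j).card : ℝ) ≤ γ * U := by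
          intro i hi
          by_contra hcon
          push_neg at hcon
          exact hjN (Finset.mem_biUnion.mpr ⟨i, hi,
            Finset.mem_filter.mpr ⟨Finset.mem_univ _, le_of_lt hcon⟩⟩)
        calc ∑ i ∈ S, ((G i ∩ C j).card : ℝ) ≤ ∑ _i ∈ S, (γ * U) :=
              Finset.sum_le_sum this
          _ = (S.card : ℝ) * (γ * U) := by rw [Finset.sum_const, nsmul_eq_mul]
      calc ∑ j ∈ Nᶜ, ∑ i ∈ S, ((G i ∩ C j).card : ℝ)
          ≤ ∑ _j ∈ Nᶜ, ((S.card : ℝ) * (γ * U)) := Finset.sum_le_sum hterm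
        _ = (Nᶜ.card : ℝ) * ((S.card : ℝ) * (γ * U)) := by
            rw [Finset.sum_const, nsmul_eq_mul]
        _ ≤ (k : ℝ) * ((S.card : ℝ) * (γ * U)) := by
            have : (Nᶜ.card : ℝ) ≤ (k : ℝ) := by
              have := Finset.card_le_univ Nᶜ
              simp only [Finset.card_univ, Fintype.card_fin] at this
              exact_mod_cast this
            have hpos : 0 ≤ (S.card : ℝ) * (γ * U) := by positivity
            nlinarith
    have hNs : (N.card : ℝ) + 1 ≤ (S.card : ℝ) := by exact_mod_cast hc
    have hfinal := hsum
    rw [hswap, hsplit] at hfinal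
    have h1 : (k : ℝ) * ((S.card : ℝ) * (γ * U)) ≤ U := by
      have h2 : (S.card : ℝ) * (γ * U) ≤ (k : ℝ) * (γ * U) :=
        mul_le_mul_of_nonneg_right hsk (by positivity)
      have h3 : (k : ℝ) * ((S.card : ℝ) * (γ * U)) ≤ (k : ℝ) * ((k : ℝ) * (γ * U)) :=
        mul_le_mul_of_nonneg_left h2 (Nat.cast_nonneg k)
      have h4 : (k : ℝ) * ((k : ℝ) * (γ * U)) = ((k : ℝ) ^ 2 * γ) * U := by ring
      nlinarith
    nlinarith [mul_le_mul_of_nonneg_right hNs hU.le]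
  obtain ⟨f, hf, hft⟩ := (Finset.all_card_le_biUnion_card_iff_exists_injective t).mp hall
  refine ⟨f, hf, fun i => ?_⟩
  have := hft i
  rw [ht] at this
  exact (Finset.mem_filter.mp this).2
end

section
/- If X ⊆ [h] is a set of left vertices in the bipartite graph H above with neighborhood N(X), then ∑_{i∈X} |G_i| ≤ |N(X)|·U + k²·γ·U; in particular if |N(X)| < |X| and k²γ ≤ 1 this contradicts |G_i| > U for all i. -/
theorem stmt_1 {α : Type*} [DecidableEq α] (h k : ℕ) (U γ : ℝ)
    (hU : 0 < U) (hγ : 0 < γ) (hkγ : (k : ℝ) ^ 2 * γ ≤ 1)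
    (G : Fin h → Finset α) (C : Fin k → Finset α)
    (hGdisj : ∀ i i', i ≠ i' → Disjoint (G i) (G i'))
    (hCdisj : ∀ j j', j ≠ j' → Disjoint (C j) (C j'))
    (hGU : ∀ i, U < ((G i).card : ℝ))
    (hCU : ∀ j, ((C j).card : ℝ) ≤ U)
    (hcover : ∀ i, ∀ x ∈ G i, ∃ j, x ∈ C j)
    (X : Finset (Fin h)) (N : Finset (Fin k))
    (hN : ∀ j, j ∈ N ↔ ∃ i ∈ X, γ * U ≤ ((G i ∩ C j).card : ℝ)) :
    (∑ i ∈ X, ((G i).card : ℝ)) ≤ (N.card : ℝ) * U + (k : ℝ) ^ 2 * γ * U ∧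
      (N.card < X.card → False) := by
  classical
  -- each G i decomposes over the disjoint cover
  have hGsum : ∀ i, (G i).card = ∑ j : Fin k, (G i ∩ C j).card := by
    intro i
    have hGeq : G i = Finset.univ.biUnion (fun j => G i ∩ C j) := by
      ext x
      simp only [Finset.mem_biUnion, Finset.mem_univ, true_and, Finset.mem_inter]
      constructor
      · intro hx
        obtain ⟨j, hj⟩ := hcover i x hx
        exact ⟨j, hx, hj⟩
      · rintro ⟨j, hx, _⟩; exact hx
    conv_lhs => rw [hGeq]
    exact Finset.card_biUnion (fun j _ j' _ hjj' =>
      (hCdisj j j' hjj').mono Finset.inter_subset_right Finset.inter_subset_right)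
  -- for a fixed j, the intersections with distinct G i are disjoint subsets of C j
  have hBsum : ∀ (S : Finset (Fin h)) (j : Fin k),
      (∑ i ∈ S, (G i ∩ C j).card) ≤ (C j).card := by
    intro S j
    have hdisj : ∀ i ∈ S, ∀ i' ∈ S, i ≠ i' →
        Disjoint (G i ∩ C j) (G i' ∩ C j) := fun i _ i' _ hii' =>
      (hGdisj i i' hii').mono Finset.inter_subset_left Finset.inter_subset_left
    calc (∑ i ∈ S, (G i ∩ C j).card) = (S.biUnion (fun i => G i ∩ C j)).card :=
          (Finset.card_biUnion hdisj).symm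
      _ ≤ (C j).card := by
          apply Finset.card_le_card
          intro x hx
          simp only [Finset.mem_biUnion] at hx
          obtain ⟨i, _, hxi⟩ := hx
          exact (Finset.mem_inter.mp hxi).2
  -- |X| ≤ k
  have hXk : (X.card : ℝ) ≤ (k : ℝ) := by
    rcases X.eq_empty_or_nonempty with rfl | hX
    · simpa using (Nat.cast_nonneg k : (0:ℝ) ≤ k)
    · have hsum1 : (∑ i : Fin h, ((G i).card : ℝ)) ≤ (k : ℝ) * U := by
        have hn : (∑ i : Fin h, (G i).card) ≤ ∑ j : Fin k, (C j).card := by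
          calc (∑ i : Fin h, (G i).card) = ∑ i : Fin h, ∑ j : Fin k, (G i ∩ C j).card := by
                simp_rw [hGsum]
            _ = ∑ j : Fin k, ∑ i : Fin h, (G i ∩ C j).card := Finset.sum_comm
            _ ≤ ∑ j : Fin k, (C j).card := Finset.sum_le_sum (fun j _ => hBsum _ j)
        calc (∑ i : Fin h, ((G i).card : ℝ)) ≤ ∑ j : Fin k, ((C j).card : ℝ) := by
              exact_mod_cast hn
          _ ≤ ∑ _j : Fin k, U := Finset.sum_le_sum (fun j _ => hCU j)
          _ = (k : ℝ) * U := by simp [mul_comm]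
      have hhne : (Finset.univ : Finset (Fin h)).Nonempty := by
        obtain ⟨i, _⟩ := hX
        exact ⟨i, Finset.mem_univ i⟩
      have hsum2 : (h : ℝ) * U < ∑ i : Fin h, ((G i).card : ℝ) := by
        calc (h : ℝ) * U = ∑ _i : Fin h, U := by simp [mul_comm]
          _ < ∑ i : Fin h, ((G i).card : ℝ) :=
            Finset.sum_lt_sum_of_nonempty hhne (fun i _ => hGU i)
      have hhk : (h : ℝ) < (k : ℝ) :=
        lt_of_mul_lt_mul_right (by linarith) (le_of_lt hU)
      have hXh : (X.card : ℝ) ≤ (h : ℝ) := by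
        have := Finset.card_le_univ X
        simp only [Finset.card_univ, Fintype.card_fin] at this
        exact_mod_cast this
      linarith
  -- main bound
  have main : (∑ i ∈ X, ((G i).card : ℝ)) ≤ (N.card : ℝ) * U + (k : ℝ) ^ 2 * γ * U := by
    have e1 : (∑ i ∈ X, ((G i).card : ℝ))
        = ∑ j : Fin k, ∑ i ∈ X, ((G i ∩ C j).card : ℝ) := by
      rw [Finset.sum_comm]
      refine Finset.sum_congr rfl fun i _ => ?_
      exact_mod_cast congrArg (Nat.cast : ℕ → ℝ) (hGsum i)
    rw [e1, ← Finset.sum_sdiff (Finset.subset_univ N),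
        add_comm ((N.card : ℝ) * U) ((k : ℝ) ^ 2 * γ * U)]
    apply add_le_add
    · -- non-neighbors contribute < γU each
      have step : ∀ j ∈ Finset.univ \ N,
          (∑ i ∈ X, ((G i ∩ C j).card : ℝ)) ≤ X.card * (γ * U) := by
        intro j hj
        have hjN : j ∉ N := (Finset.mem_sdiff.mp hj).2
        have hlt : ∀ i ∈ X, ((G i ∩ C j).card : ℝ) ≤ γ * U := by
          intro i hi
          by_contra hc
          exact hjN ((hN j).mpr ⟨i, hi, le_of_lt (lt_of_not_ge hc)⟩)
        calc (∑ i ∈ X, ((G i ∩ C j).card : ℝ)) ≤ ∑ _i ∈ X, (γ * U) :=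
              Finset.sum_le_sum hlt
          _ = X.card * (γ * U) := by simp [mul_comm]
      calc (∑ j ∈ Finset.univ \ N, ∑ i ∈ X, ((G i ∩ C j).card : ℝ))
          ≤ ∑ _j ∈ Finset.univ \ N, (X.card * (γ * U)) := Finset.sum_le_sum step
        _ = ((Finset.univ \ N).card : ℝ) * (X.card * (γ * U)) := by
            simp [mul_comm]
        _ ≤ (k : ℝ) * ((k : ℝ) * (γ * U)) := by
            have h1 : ((Finset.univ \ N).card : ℝ) ≤ (k : ℝ) := by
              have := Finset.card_le_univ (Finset.univ \ N)
              simp only [Finset.card_univ, Fintype.card_fin] at this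
              exact_mod_cast this
            have h2 : (0:ℝ) ≤ γ * U := le_of_lt (mul_pos hγ hU)
            have h3 : (0:ℝ) ≤ (X.card : ℝ) := Nat.cast_nonneg _
            have hA : (X.card : ℝ) * (γ * U) ≤ (k : ℝ) * (γ * U) :=
              mul_le_mul_of_nonneg_right hXk h2
            exact mul_le_mul h1 hA (mul_nonneg h3 h2) (Nat.cast_nonneg k)
        _ = (k : ℝ) ^ 2 * γ * U := by ring
    · -- neighbors contribute at most U each
      have step : ∀ j ∈ N, (∑ i ∈ X, ((G i ∩ C j).card : ℝ)) ≤ U := by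
        intro j _
        calc (∑ i ∈ X, ((G i ∩ C j).card : ℝ)) ≤ ((C j).card : ℝ) := by
              exact_mod_cast hBsum X j
          _ ≤ U := hCU j
      calc (∑ j ∈ N, ∑ i ∈ X, ((G i ∩ C j).card : ℝ)) ≤ ∑ _j ∈ N, U :=
            Finset.sum_le_sum step
        _ = (N.card : ℝ) * U := by simp [mul_comm]
  refine ⟨main, fun hlt => ?_⟩
  have hXne : X.Nonempty := Finset.card_pos.mp (lt_of_le_of_lt (Nat.zero_le _) hlt)
  have hbig : (X.card : ℝ) * U < ∑ i ∈ X, ((G i).card : ℝ) := by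
    calc (X.card : ℝ) * U = ∑ _i ∈ X, U := by simp [mul_comm]
      _ < ∑ i ∈ X, ((G i).card : ℝ) :=
        Finset.sum_lt_sum_of_nonempty hXne (fun i _ => hGU i)
  have hcast : (N.card : ℝ) + 1 ≤ (X.card : ℝ) := by exact_mod_cast hlt
  have hk2 : (k : ℝ) ^ 2 * γ * U ≤ U := by nlinarith
  nlinarith
end
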